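/- arXiv:2403.11151 — 6 statements merged into one kernel-verified Lean document; each statement's English description precedes it below -/
import Mathlib

section
/- Let Γ be a subgroup of F_n and S ⊆ F_n a subset with Γ ⊆ S and γS ⊆ S for all γ ∈ Γ. If x·s ∈ I(Γ,S) and s̄·y ∈ I(Γ,S) for words x, s, y, then x·y ∈ I(Γ,S). Consequently I(Γ,S) is fusion-closed. -/
/-- Evaluation map `π`: a word (list of letters `(j, ε)` with `ε : Bool` meaning `+1`/`-1`)
is sent to `a_{j₁}^{ε₁} ⋯ a_{j_k}^{ε_k}` in the free group `F_n`. -/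
def evalWord (n : ℕ) (w : List (Fin n × Bool)) : FreeGroup (Fin n) :=
  (w.map fun p => if p.2 then FreeGroup.of p.1 else (FreeGroup.of p.1)⁻¹).prod

/-- The reverse-inverse `w̄` of a word `w`. -/
def barWord {n : ℕ} (w : List (Fin n × Bool)) : List (Fin n × Bool) :=
  (w.map fun p => (p.1, !p.2)).reverse

/-- The prefix set `P(w)` of a word `w`: evaluations of all initial segments of `w`. -/
def prefixSet (n : ℕ) (w : List (Fin n × Bool)) : Set (FreeGroup (Fin n)) :=
  {g | ∃ p, p <+: w ∧ evalWord n p = g}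

/-- The Cayley graph of `F_n`: `g` and `h` are adjacent iff `g⁻¹ * h ∈ {a_j^{±1}}`. -/
def cayley (n : ℕ) : SimpleGraph (FreeGroup (Fin n)) :=
  SimpleGraph.fromRel (fun g h => ∃ j : Fin n, g⁻¹ * h = FreeGroup.of j)

/-- A set of words is fusion-closed if it contains the empty word, is closed under
reverse-inverse, and `x·s ∈ I`, `s̄·y ∈ I` imply `x·y ∈ I`. -/
def FusionClosed (n : ℕ) (I : Set (List (Fin n × Bool))) : Prop :=
  ([] ∈ I) ∧ (∀ w ∈ I, barWord w ∈ I) ∧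
    ∀ x s y : List (Fin n × Bool), x ++ s ∈ I → barWord s ++ y ∈ I → x ++ y ∈ I

/-- `I(Γ,S)`: the set of words `w` with `π(w) ∈ Γ` and `P(w) ⊆ S`. -/
def Iset (n : ℕ) (Γ S : Set (FreeGroup (Fin n))) : Set (List (Fin n × Bool)) :=
  {w | evalWord n w ∈ Γ ∧ prefixSet n w ⊆ S}


lemma evalWord_append (n : ℕ) (x y : List (Fin n × Bool)) :
    evalWord n (x ++ y) = evalWord n x * evalWord n y := by
  simp [evalWord]

lemma barWord_append {n : ℕ} (x y : List (Fin n × Bool)) :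
    barWord (x ++ y) = barWord y ++ barWord x := by
  simp [barWord]

lemma barWord_barWord {n : ℕ} (w : List (Fin n × Bool)) :
    barWord (barWord w) = w := by
  simp [barWord, Function.comp_def]

lemma evalWord_bar (n : ℕ) (w : List (Fin n × Bool)) :
    evalWord n (barWord w) = (evalWord n w)⁻¹ := by
  induction w with
  | nil => simp [barWord, evalWord]
  | cons p w ih =>
    have h1 : barWord (p :: w) = barWord w ++ [(p.1, !p.2)] := by simp [barWord]
    have h2 : evalWord n [(p.1, !p.2)] = (evalWord n [p])⁻¹ := by
      cases h : p.2 <;> simp [evalWord, h]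
    have h3 : evalWord n (p :: w) = evalWord n [p] * evalWord n w := by
      simpa using evalWord_append n [p] w
    rw [h1, evalWord_append, ih, h2, h3, mul_inv_rev]

lemma prefix_append_cases {α : Type*} {p x y : List α} (h : p <+: x ++ y) :
    p <+: x ∨ ∃ q, q <+: y ∧ p = x ++ q := by
  rcases le_or_gt p.length x.length with hl | hl
  · exact Or.inl (List.prefix_of_prefix_length_le h (x.prefix_append y) hl)
  · have hx : x <+: p := List.prefix_of_prefix_length_le (x.prefix_append y) h hl.le
    rcases hx with ⟨q, rfl⟩
    refine Or.inr ⟨q, ?_, rfl⟩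
    rcases h with ⟨t, ht⟩
    rw [List.append_assoc] at ht
    exact ⟨t, List.append_cancel_left ht⟩

lemma prefixSet_bar {n : ℕ} {w : List (Fin n × Bool)} {g : FreeGroup (Fin n)}
    (hg : g ∈ prefixSet n (barWord w)) :
    ∃ h ∈ prefixSet n w, g = (evalWord n w)⁻¹ * h := by
  rcases hg with ⟨p, ⟨t, ht⟩, rfl⟩
  have hw : w = barWord t ++ barWord p := by
    rw [← barWord_append, ht, barWord_barWord]
  refine ⟨evalWord n (barWord t), ⟨barWord t, ⟨barWord p, hw.symm⟩, rfl⟩, ?_⟩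
  have : evalWord n w = evalWord n (barWord t) * evalWord n (barWord p) := by
    rw [hw, evalWord_append]
  rw [this, evalWord_bar, evalWord_bar]
  group

/-- For `Γ ≤ F_n` and `S ⊆ F_n` with `Γ ⊆ S` and `γS ⊆ S` for all `γ ∈ Γ`:
if `x·s ∈ I(Γ,S)` and `s̄·y ∈ I(Γ,S)` then `x·y ∈ I(Γ,S)`; consequently
`I(Γ,S)` is fusion-closed. -/
theorem stmt_5 (n : ℕ) (hn : 1 ≤ n) (Γ : Subgroup (FreeGroup (Fin n)))
    (S : Set (FreeGroup (Fin n))) (hΓS : (Γ : Set (FreeGroup (Fin n))) ⊆ S)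
    (hinv : ∀ γ ∈ Γ, ∀ s ∈ S, γ * s ∈ S) :
    (∀ x s y : List (Fin n × Bool),
        x ++ s ∈ Iset n (Γ : Set (FreeGroup (Fin n))) S →
        barWord s ++ y ∈ Iset n (Γ : Set (FreeGroup (Fin n))) S →
        x ++ y ∈ Iset n (Γ : Set (FreeGroup (Fin n))) S) ∧
      FusionClosed n (Iset n (Γ : Set (FreeGroup (Fin n))) S) := by
  have main : ∀ x s y : List (Fin n × Bool),
      x ++ s ∈ Iset n (Γ : Set (FreeGroup (Fin n))) S →
      barWord s ++ y ∈ Iset n (Γ : Set (FreeGroup (Fin n))) S →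
      x ++ y ∈ Iset n (Γ : Set (FreeGroup (Fin n))) S := by
    intro x s y ⟨hΓ1, hS1⟩ ⟨hΓ2, hS2⟩
    rw [evalWord_append] at hΓ1
    rw [evalWord_append, evalWord_bar] at hΓ2
    constructor
    · rw [evalWord_append]
      have := mul_mem hΓ1 hΓ2
      have heq : evalWord n x * evalWord n s * ((evalWord n s)⁻¹ * evalWord n y)
          = evalWord n x * evalWord n y := by group
      rwa [heq] at this
    · rintro g ⟨p, hp, rfl⟩
      rcases prefix_append_cases hp with hpx | ⟨q, hq, rfl⟩
      · exact hS1 ⟨p, hpx.trans (x.prefix_append s), rfl⟩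
      · have hmem : (evalWord n s)⁻¹ * evalWord n q ∈ S := by
          refine hS2 ⟨barWord s ++ q, ?_, ?_⟩
          · rcases hq with ⟨t, ht⟩
            exact ⟨t, by rw [List.append_assoc, ht]⟩
          · rw [evalWord_append, evalWord_bar]
        have := hinv _ hΓ1 _ hmem
        have heq : evalWord n x * evalWord n s * ((evalWord n s)⁻¹ * evalWord n q)
            = evalWord n (x ++ q) := by rw [evalWord_append]; group
        rwa [heq] at this
  refine ⟨main, ?_, ?_, main⟩
  · refine ⟨by simp [evalWord, one_mem], ?_⟩
    rintro g ⟨p, hp, rfl⟩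
    rw [List.prefix_nil.mp hp]
    exact hΓS (one_mem Γ)
  · rintro w ⟨hΓw, hSw⟩
    refine ⟨by rw [evalWord_bar]; exact inv_mem hΓw, ?_⟩
    intro g hg
    rcases prefixSet_bar hg with ⟨h, hh, rfl⟩
    exact hinv _ (inv_mem hΓw) _ (hSw hh)
end

section
/- Let I be a fusion-closed set of words and let w = ((j_1,ε_1),…,(j_k,ε_k)) ∈ I. Then for every 0 ≤ l ≤ k, the concatenation of the reduced word [a_{j_1}^{ε_1}⋯a_{j_l}^{ε_l}] with the word ((j_{l+1},ε_{l+1}),…,(j_k,ε_k)) belongs to I. -/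
lemma evalWord_eq_mk (n : ℕ) (w : List (Fin n × Bool)) :
    evalWord n w = FreeGroup.mk w := by
  induction w with
  | nil =>
    show (1 : FreeGroup (Fin n)) = FreeGroup.mk []
    exact FreeGroup.one_eq_mk
  | cons a t ih =>
    obtain ⟨x, b⟩ := a
    have : FreeGroup.mk ((x, b) :: t) = FreeGroup.mk [(x, b)] * FreeGroup.mk t := by
      rw [FreeGroup.mul_mk]; rfl
    rw [this, ← ih]
    cases b with
    | true =>
      show FreeGroup.of x * evalWord n t = FreeGroup.mk [(x, true)] * evalWord n t
      rfl
    | false =>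
      show (FreeGroup.of x)⁻¹ * evalWord n t = FreeGroup.mk [(x, false)] * evalWord n t
      congr 1

lemma barWord_cancel {n : ℕ} (x : Fin n) (b : Bool) (q : List (Fin n × Bool)) :
    barWord ((x, b) :: (x, !b) :: q) = barWord q ++ [(x, b), (x, !b)] := by
  simp [barWord]

/-- Deleting a cancelling pair preserves membership in a fusion-closed set. -/
lemma delete_pair {n : ℕ} {I : Set (List (Fin n × Bool))} (hI : FusionClosed n I)
    (p q : List (Fin n × Bool)) (x : Fin n) (b : Bool)
    (h : p ++ (x, b) :: (x, !b) :: q ∈ I) : p ++ q ∈ I := by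
  obtain ⟨-, hbar, hfuse⟩ := hI
  have hb := hbar _ h
  have hb' : (barWord q ++ [(x, b)]) ++ ([(x, !b)] ++ barWord p) ∈ I := by
    simpa [barWord, List.append_assoc] using hb
  have hw' : barWord ([(x, !b)] ++ barWord p) ++ ([(x, !b)] ++ q) ∈ I := by
    have : barWord ([(x, !b)] ++ barWord p) = p ++ [(x, b)] := by
      simp [barWord, List.map_map, Function.comp_def]
    rw [this]
    simpa [List.append_assoc] using h
  have h3 : (barWord q ++ [(x, b)]) ++ ([(x, !b)] ++ q) ∈ I :=
    hfuse _ _ _ hb' hw'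
  have h3' : barWord ((x, b) :: (x, !b) :: q) ++ q ∈ I := by
    rw [barWord_cancel]
    simpa [List.append_assoc] using h3
  exact hfuse p ((x, b) :: (x, !b) :: q) q (by simpa using h) h3'

lemma red_preserves {n : ℕ} {I : Set (List (Fin n × Bool))} (hI : FusionClosed n I)
    {u v : List (Fin n × Bool)} (h : FreeGroup.Red u v) :
    ∀ y, u ++ y ∈ I → v ++ y ∈ I := by
  induction h with
  | refl => exact fun y hy => hy
  | tail _ hstep ih =>
    intro y hy
    cases hstep with
    | @not L₁ L₂ x b =>
      have := ih y hy
      have h1 : L₁ ++ (x, b) :: (x, !b) :: (L₂ ++ y) ∈ I := by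
        simpa [List.append_assoc] using this
      have := delete_pair hI L₁ (L₂ ++ y) x b h1
      simpa [List.append_assoc] using this

/-- If `I` is fusion-closed and `w ∈ I`, then for every `l ≤ k` the word
`[a_{j₁}^{ε₁}⋯a_{j_l}^{ε_l}] · ((j_{l+1},ε_{l+1}),…,(j_k,ε_k))` belongs to `I`. -/
theorem stmt_6 (n : ℕ) (hn : 1 ≤ n) (I : Set (List (Fin n × Bool)))
    (hI : FusionClosed n I) (w : List (Fin n × Bool)) (hw : w ∈ I)
    (l : ℕ) (hl : l ≤ w.length) :
    (evalWord n (w.take l)).toWord ++ w.drop l ∈ I := by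
  have htw : (evalWord n (w.take l)).toWord = FreeGroup.reduce (w.take l) := by
    rw [evalWord_eq_mk, FreeGroup.toWord_mk]
  rw [htw]
  have hred : FreeGroup.Red (w.take l) (FreeGroup.reduce (w.take l)) :=
    FreeGroup.reduce.red
  exact red_preserves hI hred (w.drop l) (by rw [List.take_append_drop]; exact hw)
end

section
/- If I is a fusion-closed set of words and g ∈ π(I) := {π(w) : w ∈ I}, then the reduced word [g] belongs to I. -/
lemma cancel {n : ℕ} {I : Set (List (Fin n × Bool))} (hI : FusionClosed n I)
    (x y : List (Fin n × Bool)) (j : Fin n) (b : Bool)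
    (h : x ++ (j, b) :: (j, !b) :: y ∈ I) : x ++ y ∈ I := by
  obtain ⟨-, hbar, hfus⟩ := hI
  have hb : barWord (x ++ (j, b) :: (j, !b) :: y)
      = (barWord y ++ [(j, b)]) ++ ((j, !b) :: barWord x) := by
    simp [barWord, List.reverse_append]
  have hw' : (barWord y ++ [(j, b)]) ++ ((j, !b) :: barWord x) ∈ I := hb ▸ hbar _ h
  have hs2 : barWord ((j, !b) :: barWord x) ++ ((j, !b) :: y)
      = x ++ (j, b) :: (j, !b) :: y := by
    simp [barWord, List.map_reverse, List.map_map, Function.comp_def]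
  have hv : (barWord y ++ [(j, b)]) ++ ((j, !b) :: y) ∈ I :=
    hfus _ _ _ hw' (hs2 ▸ h)
  have hs3 : barWord ((j, b) :: (j, !b) :: y) ++ y
      = (barWord y ++ [(j, b)]) ++ ((j, !b) :: y) := by
    simp [barWord]
  exact hfus x ((j, b) :: (j, !b) :: y) y h (hs3 ▸ hv)

/-- If `I` is fusion-closed and `g ∈ π(I)`, then the reduced word `[g]` belongs to `I`. -/
theorem stmt_10 (n : ℕ) (hn : 1 ≤ n) (I : Set (List (Fin n × Bool)))
    (hI : FusionClosed n I) (g : FreeGroup (Fin n)) (hg : g ∈ evalWord n '' I) :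
    FreeGroup.toWord g ∈ I := by
  obtain ⟨w, hw, rfl⟩ := hg
  rw [evalWord_eq_mk, FreeGroup.toWord_mk]
  have key : ∀ v, FreeGroup.Red w v → v ∈ I := by
    intro v hred
    induction hred with
    | refl => exact hw
    | tail _ step ih =>
      cases step with
      | not => exact cancel hI _ _ _ _ ih
  exact key _ FreeGroup.reduce.red
end

section
/- If I is a fusion-closed set of words, g ∈ π(I) := {π(w) : w ∈ I}, and h ∈ S_I := ⋃_{w ∈ I} P(w), then gh ∈ S_I. That is, S_I is invariant under left multiplication by elements of π(I). -/
/-- If `I` is fusion-closed, `g ∈ π(I)` and `h ∈ S_I`, then `g * h ∈ S_I`. -/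
theorem stmt_12 (n : ℕ) (hn : 1 ≤ n) (I : Set (List (Fin n × Bool)))
    (hI : FusionClosed n I) (g h : FreeGroup (Fin n))
    (hg : g ∈ evalWord n '' I) (hh : h ∈ ⋃ w ∈ I, prefixSet n w) :
    g * h ∈ ⋃ w ∈ I, prefixSet n w := by
  obtain ⟨u, hu, rfl⟩ := hg
  simp only [Set.mem_iUnion] at hh ⊢
  obtain ⟨w, hw, p, hp, rfl⟩ := hh
  have huw : u ++ w ∈ I := by
    have := hI.2.2 u [] w (by simpa using hu) (by simpa [barWord] using hw)
    simpa using this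
  refine ⟨u ++ w, huw, u ++ p, ⟨hp.choose, by rw [List.append_assoc, hp.choose_spec]⟩, ?_⟩
  simp [evalWord, List.map_append, List.prod_append]
end

section
/- Let I be a fusion-closed set of words, and let w be any word such that π(w) ∈ π(I) := {π(v) : v ∈ I} and P(w) ⊆ S_I := ⋃_{v ∈ I} P(v). Then w ∈ I. In other words, I(π(I), S_I) ⊆ I. -/
namespace Stmt13Aux

variable {n : ℕ} {I : Set (List (Fin n × Bool))}

lemma bar_eq_invRev (w : List (Fin n × Bool)) : barWord w = FreeGroup.invRev w := rfl

lemma bar_append (x y : List (Fin n × Bool)) :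
    barWord (x ++ y) = barWord y ++ barWord x := by
  simp [barWord]

lemma bar_bar (w : List (Fin n × Bool)) : barWord (barWord w) = w := by
  rw [bar_eq_invRev, bar_eq_invRev, FreeGroup.invRev_invRev]

lemma evalWord_eq_mk (w : List (Fin n × Bool)) : evalWord n w = FreeGroup.mk w := by
  induction w with
  | nil =>
    rw [← FreeGroup.one_eq_mk]; rfl
  | cons a t ih =>
    have h1 : evalWord n (a :: t) =
        (if a.2 then FreeGroup.of a.1 else (FreeGroup.of a.1)⁻¹) * evalWord n t := by
      simp [evalWord]
    have h2 : FreeGroup.mk (a :: t) = FreeGroup.mk [a] * FreeGroup.mk t := by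
      rw [FreeGroup.mul_mk]; rfl
    rw [h1, h2, ih]
    congr 1
    obtain ⟨j, b⟩ := a
    cases b with
    | true => rfl
    | false =>
      show (FreeGroup.mk [(j, true)])⁻¹ = _
      rw [FreeGroup.inv_mk]; rfl

/-- `p` is a prefix of a word of `I`. -/
def Pre (I : Set (List (Fin n × Bool))) (p : List (Fin n × Bool)) : Prop :=
  ∃ m, p ++ m ∈ I

/-- The fusion equivalence: `p ++ q̄ ∈ I`. -/
def Rel (I : Set (List (Fin n × Bool))) (p q : List (Fin n × Bool)) : Prop :=
  p ++ barWord q ∈ I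

variable (hI : FusionClosed n I)
include hI

lemma fuse' (x s y : List (Fin n × Bool)) (h1 : x ++ s ∈ I) (h2 : barWord s ++ y ∈ I) :
    x ++ y ∈ I := hI.2.2 x s y h1 h2

lemma mem_bar {w : List (Fin n × Bool)} (h : w ∈ I) : barWord w ∈ I := hI.2.1 w h

lemma pre_of_mem {w : List (Fin n × Bool)} (h : w ∈ I) : Pre I w :=
  ⟨[], by simpa using h⟩

lemma pre_prefix {p q : List (Fin n × Bool)} (h : Pre I (p ++ q)) : Pre I p := by
  obtain ⟨m, hm⟩ := h
  exact ⟨q ++ m, by rwa [← List.append_assoc]⟩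

lemma rel_refl {p : List (Fin n × Bool)} (h : Pre I p) : Rel I p p := by
  obtain ⟨m, hm⟩ := h
  have h2 : barWord m ++ barWord p ∈ I := by
    have := mem_bar hI hm
    rwa [bar_append] at this
  exact fuse' hI p m (barWord p) hm h2

lemma rel_symm {p q : List (Fin n × Bool)} (h : Rel I p q) : Rel I q p := by
  have := mem_bar hI h
  rwa [bar_append, bar_bar] at this

lemma rel_trans {p q r : List (Fin n × Bool)} (h1 : Rel I p q) (h2 : Rel I q r) :
    Rel I p r := by
  refine fuse' hI p (barWord q) (barWord r) h1 ?_
  rwa [bar_bar]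

lemma rel_pre_left {p q : List (Fin n × Bool)} (h : Rel I p q) : Pre I p :=
  ⟨barWord q, h⟩

/-- One-letter extension of the fusion equivalence. -/
lemma ext_letter {p q : List (Fin n × Bool)} {ℓ : Fin n × Bool}
    (h : Rel I p q) (hp : Pre I (p ++ [ℓ])) :
    Rel I (p ++ [ℓ]) (q ++ [ℓ]) ∧ Pre I (q ++ [ℓ]) := by
  set ℓ' : Fin n × Bool := (ℓ.1, !ℓ.2) with hℓ'
  have hbarℓ : barWord [ℓ] = [ℓ'] := rfl
  have hqp : q ++ barWord p ∈ I := rel_symm hI h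
  have A : p ++ ([ℓ, ℓ'] ++ barWord p) ∈ I := by
    have := rel_refl hI hp
    unfold Rel at this
    rw [bar_append, hbarℓ] at this
    simpa [List.append_assoc] using this
  have step1 : q ++ ([ℓ, ℓ'] ++ barWord p) ∈ I := by
    refine fuse' hI q (barWord p) ([ℓ, ℓ'] ++ barWord p) hqp ?_
    rwa [bar_bar]
  have step2 : (q ++ [ℓ, ℓ']) ++ barWord q ∈ I := by
    refine fuse' hI (q ++ [ℓ, ℓ']) (barWord p) (barWord q) ?_ ?_
    · simpa [List.append_assoc] using step1
    · rw [bar_bar]; exact h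
  constructor
  · have : p ++ ([ℓ, ℓ'] ++ barWord q) ∈ I := by
      refine fuse' hI p (barWord q) ([ℓ, ℓ'] ++ barWord q) h ?_
      rw [bar_bar]
      simpa [List.append_assoc] using step2
    show (p ++ [ℓ]) ++ barWord (q ++ [ℓ]) ∈ I
    rw [bar_append, hbarℓ]
    simpa [List.append_assoc] using this
  · exact ⟨ℓ' :: barWord q, by simpa [List.append_assoc] using step2⟩

/-- Word extension of the fusion equivalence. -/
lemma ext_word {y p q : List (Fin n × Bool)}
    (h : Rel I p q) (hp : Pre I (p ++ y)) :
    Rel I (p ++ y) (q ++ y) ∧ Pre I (q ++ y) := by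
  induction y generalizing p q with
  | nil =>
    refine ⟨by simpa using h, ?_⟩
    have := rel_pre_left hI (rel_symm hI h)
    simpa using this
  | cons ℓ t ih =>
    have hp1 : Pre I (p ++ [ℓ]) := by
      refine pre_prefix hI (p := p ++ [ℓ]) (q := t) ?_
      simpa [List.append_assoc] using hp
    obtain ⟨h1, _⟩ := ext_letter hI h hp1
    have hp2 : Pre I ((p ++ [ℓ]) ++ t) := by simpa [List.append_assoc] using hp
    obtain ⟨h2, h3⟩ := ih h1 hp2
    refine ⟨by simpa [List.append_assoc] using h2, by simpa [List.append_assoc] using h3⟩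

lemma step_del {L₁ L₂ : List (Fin n × Bool)} (h : FreeGroup.Red.Step L₁ L₂)
    (h1 : Pre I L₁) : Rel I L₁ L₂ ∧ Pre I L₂ := by
  cases h with
  | @not La Lb x b =>
    have hpre : Pre I (La ++ [(x, b)]) := by
      refine pre_prefix hI (p := La ++ [(x, b)]) (q := (x, !b) :: Lb) ?_
      simpa [List.append_assoc] using h1
    have hrefl := rel_refl hI hpre
    unfold Rel at hrefl
    rw [bar_append] at hrefl
    have hbarxb : barWord [(x, b)] = [(x, !b)] := rfl
    rw [hbarxb] at hrefl
    -- `(La ++ [(x,b),(x,!b)]) ++ barWord La ∈ I`, i.e. `Rel (La ++ [(x,b),(x,!b)]) La`.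
    have hR : Rel I (La ++ [(x, b), (x, !b)]) La := by
      unfold Rel
      simpa [List.append_assoc] using hrefl
    have hP : Pre I ((La ++ [(x, b), (x, !b)]) ++ Lb) := by
      simpa [List.append_assoc] using h1
    obtain ⟨h2, h3⟩ := ext_word hI hR hP
    constructor
    · show Rel I (La ++ (x, b) :: (x, !b) :: Lb) (La ++ Lb)
      have : La ++ (x, b) :: (x, !b) :: Lb = (La ++ [(x, b), (x, !b)]) ++ Lb := by
        simp [List.append_assoc]
      rw [this]
      exact h2
    · exact h3

lemma red_del {L₁ L₂ : List (Fin n × Bool)} (h : FreeGroup.Red L₁ L₂)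
    (h1 : Pre I L₁) : Rel I L₁ L₂ ∧ Pre I L₂ := by
  induction h with
  | refl => exact ⟨rel_refl hI h1, h1⟩
  | tail hab hbc ih =>
    obtain ⟨h2, h3⟩ := ih
    obtain ⟨h4, h5⟩ := step_del hI hbc h3
    exact ⟨rel_trans hI h2 h4, h5⟩

/-- Same-evaluation prefixes of `I` are fusion equivalent. -/
lemma rel_of_eval {p q : List (Fin n × Bool)} (hp : Pre I p) (hq : Pre I q)
    (h : FreeGroup.mk p = FreeGroup.mk q) : Rel I p q := by
  obtain ⟨h1, _⟩ := red_del hI (FreeGroup.reduce.red (L := p)) hp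
  obtain ⟨h2, _⟩ := red_del hI (FreeGroup.reduce.red (L := q)) hq
  have hrq : FreeGroup.reduce p = FreeGroup.reduce q := FreeGroup.reduce.sound h
  rw [hrq] at h1
  exact rel_trans hI h1 (rel_symm hI h2)

lemma reduce_concat {r : List (Fin n × Bool)} {ℓ : Fin n × Bool}
    (hr : FreeGroup.reduce r = r) (h : ¬ ∃ r', r = r' ++ [(ℓ.1, !ℓ.2)]) :
    FreeGroup.reduce (r ++ [ℓ]) = r ++ [ℓ] := by
  have h1 : FreeGroup.invRev (r ++ [ℓ]) = (ℓ.1, !ℓ.2) :: FreeGroup.invRev r := by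
    simp [FreeGroup.invRev]
  have h2 : FreeGroup.reduce (FreeGroup.invRev r) = FreeGroup.invRev r := by
    rw [FreeGroup.reduce_invRev, hr]
  have h3 : FreeGroup.reduce ((ℓ.1, !ℓ.2) :: FreeGroup.invRev r)
      = (ℓ.1, !ℓ.2) :: FreeGroup.invRev r := by
    rw [FreeGroup.reduce.cons, h2]
    cases hir : FreeGroup.invRev r with
    | nil => rfl
    | cons hd tl =>
      have hcond : ¬ ((ℓ.1, !ℓ.2).1 = hd.1 ∧ (ℓ.1, !ℓ.2).2 = !hd.2) := by
        rintro ⟨hc1, hc2⟩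
        apply h
        refine ⟨FreeGroup.invRev tl, ?_⟩
        have : r = FreeGroup.invRev (hd :: tl) := by
          rw [← hir, FreeGroup.invRev_invRev]
        rw [this]
        have hhd : hd = (ℓ.1, ℓ.2) := by
          obtain ⟨a1, a2⟩ := hd
          simp only at hc1 hc2
          have : a2 = ℓ.2 := by
            cases a2 <;> cases hℓ : ℓ.2 <;> simp_all
          simp [← hc1, this]
        rw [hhd]
        simp [FreeGroup.invRev]
      simp only [hcond, if_false]
  have h4 := FreeGroup.reduce_invRev (w := r ++ [ℓ])
  rw [h1, h3, ← h1] at h4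
  exact (FreeGroup.invRev_injective h4.symm)

/-- Crossing lemma: if `p` is a prefix of `I`, and the endpoint of `p ++ [ℓ]` is the
endpoint of some prefix `q` of `I`, then `p ++ [ℓ]` is a prefix of `I`. -/
lemma crossing {p q : List (Fin n × Bool)} {ℓ : Fin n × Bool}
    (hp : Pre I p) (hq : Pre I q)
    (h : FreeGroup.mk q = FreeGroup.mk (p ++ [ℓ])) : Pre I (p ++ [ℓ]) := by
  obtain ⟨hpr, hprP⟩ := red_del hI (FreeGroup.reduce.red (L := p)) hp
  set r := FreeGroup.reduce p with hrdef
  by_cases hcase : ∃ r', r = r' ++ [(ℓ.1, !ℓ.2)]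
  · obtain ⟨r', hr'⟩ := hcase
    -- r ++ [ℓ] is a prefix of `r' ++ [(ℓ.1,!ℓ.2)] ++ [ℓ] ++ barWord r' = r ++ barWord r`
    have hrr := rel_refl hI hprP
    unfold Rel at hrr
    have hbar : barWord r = (ℓ.1, !(!ℓ.2)) :: barWord r' := by
      rw [hr', bar_append]
      rfl
    have hPrℓ : Pre I (r ++ [ℓ]) := by
      refine ⟨barWord r', ?_⟩
      have hℓeq : (ℓ.1, !(!ℓ.2)) = ℓ := by
        obtain ⟨j, b⟩ := ℓ; simp
      rw [hbar, hℓeq] at hrr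
      simpa [List.append_assoc] using hrr
    obtain ⟨_, h2⟩ := ext_letter hI (rel_symm hI hpr) hPrℓ
    exact h2
  · have hred : FreeGroup.reduce (r ++ [ℓ]) = r ++ [ℓ] :=
      reduce_concat hI (FreeGroup.reduce.idem (L := p)) hcase
    have hmk : FreeGroup.mk q = FreeGroup.mk (r ++ [ℓ]) := by
      rw [h, ← FreeGroup.mul_mk, ← FreeGroup.mul_mk, hrdef, FreeGroup.reduce.self]
    have hq' : FreeGroup.reduce q = r ++ [ℓ] := by
      rw [FreeGroup.reduce.sound hmk, hred]
    obtain ⟨_, hqP⟩ := red_del hI (FreeGroup.reduce.red (L := q)) hq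
    rw [hq'] at hqP
    obtain ⟨_, h2⟩ := ext_letter hI (rel_symm hI hpr) hqP
    exact h2

end Stmt13Aux

/-- If `I` is fusion-closed, `π(w) ∈ π(I)` and `P(w) ⊆ S_I`, then `w ∈ I`;
i.e. `I(π(I), S_I) ⊆ I`. -/
theorem stmt_13 (n : ℕ) (hn : 1 ≤ n) (I : Set (List (Fin n × Bool)))
    (hI : FusionClosed n I) (w : List (Fin n × Bool))
    (hπ : evalWord n w ∈ evalWord n '' I)
    (hP : prefixSet n w ⊆ ⋃ v ∈ I, prefixSet n v) :
    w ∈ I := by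
  classical
  open Stmt13Aux in
  -- Step 1: every prefix of `w` is a prefix of a word of `I`.
  have key : ∀ p : List (Fin n × Bool), p <+: w → Stmt13Aux.Pre I p := by
    intro p
    induction p using List.reverseRecOn with
    | nil => exact fun _ => ⟨[], by simpa using hI.1⟩
    | append_singleton t ℓ ih =>
      intro hpre
      have ht : t <+: w := (List.prefix_append t [ℓ]).trans hpre
      have hPt : Stmt13Aux.Pre I t := ih ht
      have hmem : evalWord n (t ++ [ℓ]) ∈ ⋃ v ∈ I, prefixSet n v :=
        hP ⟨t ++ [ℓ], hpre, rfl⟩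
      simp only [Set.mem_iUnion] at hmem
      obtain ⟨v, hv, q, hqv, hqe⟩ := hmem
      have hPq : Stmt13Aux.Pre I q := by
        obtain ⟨m, hm⟩ := hqv
        exact ⟨m, by rw [hm]; exact hv⟩
      refine Stmt13Aux.crossing hI hPt hPq ?_
      rw [← Stmt13Aux.evalWord_eq_mk, ← Stmt13Aux.evalWord_eq_mk]
      exact hqe
  obtain ⟨v, hv, hev⟩ := hπ
  have hPw : Stmt13Aux.Pre I w := key w (List.prefix_refl w)
  have hrel : Stmt13Aux.Rel I w v := by
    refine Stmt13Aux.rel_of_eval hI hPw (Stmt13Aux.pre_of_mem hI hv) ?_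
    rw [← Stmt13Aux.evalWord_eq_mk, ← Stmt13Aux.evalWord_eq_mk]
    exact hev.symm
  have : w ++ [] ∈ I := by
    refine Stmt13Aux.fuse' hI w (barWord v) [] hrel ?_
    rw [Stmt13Aux.bar_bar]
    simpa using hv
  simpa using this
end

section
/- Every fusion-closed set I of words equals I(Γ,S) where Γ = π(I) := {π(w) : w ∈ I} and S = S_I := ⋃_{w ∈ I} P(w); moreover this pair satisfies: Γ is a subgroup of F_n, Γ ⊆ S, γS ⊆ S for all γ ∈ Γ, and S is connected in the Cayley graph of F_n. -/
namespace Scratch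
variable {n : ℕ}

lemma barWord_eq_invRev (w : List (Fin n × Bool)) : barWord w = FreeGroup.invRev w := rfl

lemma bar_nil : barWord ([] : List (Fin n × Bool)) = [] := rfl

lemma bar_append (x y : List (Fin n × Bool)) : barWord (x ++ y) = barWord y ++ barWord x := by
  simp [barWord]

lemma bar_bar (w : List (Fin n × Bool)) : barWord (barWord w) = w := by
  simp [barWord_eq_invRev, FreeGroup.invRev_invRev]

lemma bar_single (l : Fin n × Bool) : barWord [l] = [(l.1, !l.2)] := rfl

lemma eval_eq_mk (w : List (Fin n × Bool)) : evalWord n w = FreeGroup.mk w := by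
  induction w with
  | nil => simp [evalWord]; exact FreeGroup.one_eq_mk
  | cons a t ih =>
    have : (a :: t) = [a] ++ t := rfl
    rw [this, ← FreeGroup.mul_mk]
    simp only [evalWord, List.map_append, List.prod_append] at ih ⊢
    rw [ih]
    congr 1
    simp only [List.map_cons, List.map_nil, List.prod_cons, List.prod_nil, mul_one]
    rcases a with ⟨j, b⟩
    cases b
    · simp only [if_neg]
      rw [show (FreeGroup.of j)⁻¹ = FreeGroup.mk (FreeGroup.invRev [(j, true)]) from FreeGroup.inv_mk]
      rfl
    · simp [FreeGroup.of]

lemma eval_nil : evalWord n [] = 1 := rfl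

lemma eval_append (x y : List (Fin n × Bool)) :
    evalWord n (x ++ y) = evalWord n x * evalWord n y := by
  simp [evalWord]

lemma eval_bar (w : List (Fin n × Bool)) : evalWord n (barWord w) = (evalWord n w)⁻¹ := by
  rw [eval_eq_mk, eval_eq_mk, barWord_eq_invRev, ← FreeGroup.inv_mk]


/-- `w` is good: `w · w̄ ∈ I`. -/
def Good {n : ℕ} (I : Set (List (Fin n × Bool))) (w : List (Fin n × Bool)) : Prop :=
  w ++ barWord w ∈ I

section Fusion
variable {I : Set (List (Fin n × Bool))} (hI : FusionClosed n I)

/-- Shorthand for the inverse of a letter. -/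
abbrev bL (l : Fin n × Bool) : Fin n × Bool := (l.1, !l.2)

lemma bL_bL (l : Fin n × Bool) : bL (bL l) = l := by cases l; simp

lemma bar_pair (l : Fin n × Bool) : barWord [l, bL l] = [l, bL l] := by
  cases l; simp [barWord]

include hI

lemma barI {w} (h : w ∈ I) : barWord w ∈ I := hI.2.1 w h

lemma fuse {x s y} (h1 : x ++ s ∈ I) (h2 : barWord s ++ y ∈ I) : x ++ y ∈ I :=
  hI.2.2 x s y h1 h2

lemma concatI {u v} (hu : u ∈ I) (hv : v ∈ I) : u ++ v ∈ I :=
  hI.2.2 u [] v (by simpa using hu) (by simpa [bar_nil] using hv)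

lemma good_of_pre {p r} (h : p ++ r ∈ I) : Good I p := by
  refine fuse hI h ?_
  rw [← bar_append]
  exact barI hI h

lemma good_of_mem {u} (h : u ∈ I) : Good I u :=
  good_of_pre hI (show u ++ [] ∈ I by rw [List.append_nil]; exact h)

lemma good_of_prefix {u p} (hu : u ∈ I) (hp : p <+: u) : Good I p := by
  obtain ⟨r, rfl⟩ := hp
  exact good_of_pre hI hu

lemma symmRel {p q} (h : p ++ barWord q ∈ I) : q ++ barWord p ∈ I := by
  have := barI hI h
  rwa [bar_append, bar_bar] at this

lemma transRel {p q r} (h1 : p ++ barWord q ∈ I) (h2 : q ++ barWord r ∈ I) :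
    p ++ barWord r ∈ I :=
  fuse hI h1 (by rwa [bar_bar])

lemma mem_of_rel {w v} (h1 : w ++ barWord v ∈ I) (h2 : v ∈ I) : w ∈ I := by
  have := fuse hI (y := []) h1 (by rwa [bar_bar, List.append_nil])
  rwa [List.append_nil] at this

lemma ins {x q} (l) (hg : Good I (x ++ [l])) (h : x ++ q ∈ I) :
    (x ++ [l, bL l]) ++ q ∈ I := by
  refine fuse hI (s := barWord x) ?_ (by rwa [bar_bar])
  have : (x ++ [l]) ++ barWord (x ++ [l]) ∈ I := hg
  rw [bar_append, bar_single] at this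
  simpa [List.append_assoc] using this

lemma del {x q} (l) (hg : Good I (x ++ [l])) (h : (x ++ [l, bL l]) ++ q ∈ I) :
    x ++ q ∈ I := by
  refine fuse hI (s := [l, bL l] ++ barWord x) ?_ ?_
  · have : (x ++ [l]) ++ barWord (x ++ [l]) ∈ I := hg
    rw [bar_append, bar_single] at this
    simpa [List.append_assoc] using this
  · rw [bar_append, bar_bar, bar_pair]
    simpa [List.append_assoc] using h


lemma reduce_step {x y : List (Fin n × Bool)} (l : Fin n × Bool)
    (hg : Good I (x ++ [l, bL l] ++ y)) :
    Good I (x ++ y) ∧ (x ++ [l, bL l] ++ y) ++ barWord (x ++ y) ∈ I := by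
  set p := x ++ [l, bL l] ++ y with hp
  have hbp : barWord p = barWord y ++ ([l, bL l] ++ barWord x) := by
    rw [hp, List.append_assoc, bar_append, bar_append, bar_pair, List.append_assoc]
  have A : p ++ barWord p ∈ I := hg
  have g1 : Good I (x ++ [l]) := by
    refine good_of_pre hI (r := [bL l] ++ y ++ barWord p) ?_
    simpa [hp, List.append_assoc] using A
  have B : x ++ (y ++ (barWord y ++ ([l, bL l] ++ barWord x))) ∈ I := by
    have := del hI l g1 (q := y ++ barWord p) (by simpa [hp, List.append_assoc] using A)
    rw [hbp] at this
    simpa [List.append_assoc] using this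
  have g2 : Good I ((x ++ y ++ barWord y) ++ [l]) := by
    refine good_of_pre hI (r := [bL l] ++ barWord x) ?_
    simpa [List.append_assoc] using B
  have C : (x ++ y) ++ barWord (x ++ y) ∈ I := by
    have := del hI l g2 (q := barWord x) (by simpa [List.append_assoc] using B)
    rw [bar_append]
    simpa [List.append_assoc] using this
  refine ⟨C, ?_⟩
  have := ins hI l g1 (q := y ++ barWord (x ++ y)) ?_
  · simpa [hp, List.append_assoc] using this
  · simpa [bar_append, List.append_assoc] using C

lemma transfer {p q} (l) (hpq : p ++ barWord q ∈ I) (hq : Good I (q ++ [l])) :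
    Good I (p ++ [l]) := by
  have hq' : q ++ ([l, bL l] ++ barWord q) ∈ I := by
    have : (q ++ [l]) ++ barWord (q ++ [l]) ∈ I := hq
    rw [bar_append, bar_single] at this
    simpa [List.append_assoc] using this
  have D : p ++ ([l, bL l] ++ barWord q) ∈ I :=
    fuse hI (s := barWord q) hpq (by rwa [bar_bar])
  have E : (p ++ [l, bL l]) ++ barWord p ∈ I := by
    refine fuse hI (s := barWord q) ?_ ?_
    · simpa [List.append_assoc] using D
    · rw [bar_bar]; exact symmRel hI hpq
  show (p ++ [l]) ++ barWord (p ++ [l]) ∈ I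
  rw [bar_append, bar_single]
  simpa [List.append_assoc] using E

lemma double {p} (m) (hg : Good I (p ++ [m])) : Good I (p ++ [m, bL m]) := by
  have hg' : (p ++ [m]) ++ barWord (p ++ [m]) ∈ I := hg
  have g1 : Good I p := good_of_pre hI (r := [m] ++ barWord (p ++ [m]))
    (by simpa [List.append_assoc] using hg')
  have W1 : (p ++ [m, bL m]) ++ barWord p ∈ I := ins hI m hg g1
  exact good_of_pre hI W1

end Fusion

lemma red_or_split (w : List (Fin n × Bool)) :
    FreeGroup.reduce w = w ∨ ∃ x l y, w = x ++ [l, bL l] ++ y := by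
  induction w with
  | nil => left; rfl
  | cons a t ih =>
    rcases ih with h | ⟨x, l, y, rfl⟩
    · cases t with
      | nil => left; rfl
      | cons c t' =>
        by_cases hac : a.1 = c.1 ∧ a.2 = !c.2
        · right
          refine ⟨[], a, t', ?_⟩
          have : c = bL a := by
            rcases a with ⟨a1, a2⟩; rcases c with ⟨c1, c2⟩
            simp only at hac
            simp [← hac.1, hac.2]
          simp [this]
        · left
          rw [FreeGroup.reduce.cons, h]
          simp [hac]
    · right; exact ⟨a :: x, l, y, rfl⟩

lemma reduced_unique {p q : List (Fin n × Bool)} (hp : FreeGroup.reduce p = p)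
    (hq : FreeGroup.reduce q = q) (h : evalWord n p = evalWord n q) : p = q := by
  rw [eval_eq_mk, eval_eq_mk] at h
  have := congrArg FreeGroup.toWord h
  rwa [FreeGroup.toWord_mk, FreeGroup.toWord_mk, hp, hq] at this

lemma eval_pair (l : Fin n × Bool) : evalWord n [l, bL l] = 1 := by
  rcases l with ⟨j, b⟩
  cases b <;> simp [evalWord]

section Fusion2
variable {I : Set (List (Fin n × Bool))} (hI : FusionClosed n I)
include hI

lemma exists_reduced : ∀ w, Good I w → ∃ q, FreeGroup.reduce q = q ∧ Good I q ∧
    w ++ barWord q ∈ I ∧ evalWord n q = evalWord n w := by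
  suffices H : ∀ k (w : List (Fin n × Bool)), w.length = k → Good I w → ∃ q,
      FreeGroup.reduce q = q ∧ Good I q ∧ w ++ barWord q ∈ I ∧
      evalWord n q = evalWord n w by
    exact fun w hw => H w.length w rfl hw
  intro k
  induction k using Nat.strong_induction_on with
  | _ k IH =>
  intro w hl hw
  rcases red_or_split w with h | ⟨x, l, y, rfl⟩
  · exact ⟨w, h, hw, hw, rfl⟩
  · obtain ⟨hgood, hrel⟩ := reduce_step hI l hw
    have hlen : (x ++ y).length < k := by subst hl; simp
    obtain ⟨q, hq1, hq2, hq3, hq4⟩ := IH _ hlen (x ++ y) rfl hgood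
    refine ⟨q, hq1, hq2, transRel hI hrel hq3, ?_⟩
    rw [hq4]
    simp only [List.append_assoc, eval_append, eval_pair, one_mul]

lemma extGood {p r} (l) (hp : Good I p) (hr : Good I r)
    (he : evalWord n r = evalWord n (p ++ [l])) : Good I (p ++ [l]) := by
  obtain ⟨p₀, hp₀red, hp₀g, hpp₀, hp₀e⟩ := exists_reduced hI p hp
  obtain ⟨r₀, hr₀red, hr₀g, hrr₀, hr₀e⟩ := exists_reduced hI r hr
  have key : Good I (p₀ ++ [l]) := by
    rcases red_or_split (p₀ ++ [l]) with h | ⟨x, m, y, hsplit⟩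
    · have heq : p₀ ++ [l] = r₀ := by
        refine reduced_unique h hr₀red ?_
        rw [hr₀e, he, eval_append, eval_append, hp₀e]
      rw [heq]; exact hr₀g
    · rcases List.eq_nil_or_concat y with rfl | ⟨y', a, rfl⟩
      · have h2 : p₀ ++ [l] = (x ++ [m]) ++ [bL m] := by simpa using hsplit
        obtain ⟨h3, h4⟩ := List.append_inj' h2 rfl
        have h5 : l = bL m := by simpa using h4
        rw [h3, h5]
        have : Good I (x ++ [m]) := h3 ▸ hp₀g
        have := double hI m this
        simpa [List.append_assoc] using this
      · exfalso
        have h2 : p₀ ++ [l] = (x ++ [m, bL m] ++ y') ++ [a] := by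
          simp [hsplit, List.append_assoc]
        obtain ⟨h3, _⟩ := List.append_inj' h2 rfl
        obtain ⟨mj, mb⟩ := m
        exact FreeGroup.reduce.not (L₂ := x) (L₃ := y') (x := mj) (b := mb)
          (by rw [hp₀red, h3]; simp [List.append_assoc])
  exact transfer hI l hpp₀ key

lemma mem_of_good_eval {w v} (hw : Good I w) (hv : v ∈ I)
    (he : evalWord n w = evalWord n v) : w ∈ I := by
  obtain ⟨w₀, hw₀red, _, hww₀, hw₀e⟩ := exists_reduced hI w hw
  obtain ⟨v₀, hv₀red, _, hvv₀, hv₀e⟩ := exists_reduced hI v (good_of_mem hI hv)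
  have : w₀ = v₀ := reduced_unique hw₀red hv₀red (by rw [hw₀e, hv₀e, he])
  have h1 : w₀ ++ barWord v ∈ I := this ▸ symmRel hI hvv₀
  exact mem_of_rel hI (transRel hI hww₀ h1) hv

lemma good_of_prefixGood : ∀ w : List (Fin n × Bool),
    (∀ p, p <+: w → ∃ q, Good I q ∧ evalWord n q = evalWord n p) → Good I w := by
  intro w
  induction w using List.reverseRecOn with
  | nil => intro _; simpa [Good, bar_nil] using hI.1
  | append_singleton w' l ih =>
    intro h
    have hw' : Good I w' := ih (fun p hp => h p (hp.trans (List.prefix_append w' [l])))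
    obtain ⟨q, hq, he⟩ := h (w' ++ [l]) (List.prefix_refl _)
    exact extGood hI l hw' hq he

end Fusion2

lemma eval_single (j : Fin n) (b : Bool) :
    evalWord n [(j, b)] = if b then FreeGroup.of j else (FreeGroup.of j)⁻¹ := by
  simp [evalWord]


lemma cayley_adj_step (p : List (Fin n × Bool)) (l : Fin n × Bool) :
    (cayley n).Adj (evalWord n (p ++ [l])) (evalWord n p) := by
  rcases l with ⟨j, b⟩
  have h := eval_append (n := n) p [(j, b)]
  rw [eval_single] at h
  simp only [cayley, SimpleGraph.fromRel_adj]
  cases b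
  · simp only [if_neg Bool.false_ne_true] at h
    refine ⟨?_, Or.inl ⟨j, ?_⟩⟩
    · rw [h]
      simp [FreeGroup.of_ne_one]
    · rw [h]
      simp [mul_assoc]
  · simp only [if_pos rfl] at h
    refine ⟨?_, Or.inr ⟨j, ?_⟩⟩
    · rw [h]
      simp [FreeGroup.of_ne_one]
    · rw [h]
      simp [mul_assoc]

end Scratch

open Scratch

/-- Every fusion-closed set `I` equals `I(Γ,S)` for `Γ = π(I)` and `S = S_I`;
moreover `Γ` is a subgroup, `Γ ⊆ S`, `γS ⊆ S` for all `γ ∈ Γ`, and `S` is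
connected in the Cayley graph. -/
theorem stmt_14 (n : ℕ) (hn : 1 ≤ n) (I : Set (List (Fin n × Bool)))
    (hI : FusionClosed n I) :
    I = Iset n (evalWord n '' I) (⋃ w ∈ I, prefixSet n w) ∧
      (∃ H : Subgroup (FreeGroup (Fin n)),
        (H : Set (FreeGroup (Fin n))) = evalWord n '' I) ∧
      (evalWord n '' I ⊆ ⋃ w ∈ I, prefixSet n w) ∧
      (∀ γ ∈ evalWord n '' I, ∀ s ∈ ⋃ w ∈ I, prefixSet n w,
        γ * s ∈ ⋃ w ∈ I, prefixSet n w) ∧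
      (SimpleGraph.induce (⋃ w ∈ I, prefixSet n w) (cayley n)).Connected := by
  classical
  have memS : ∀ {u p : List (Fin n × Bool)}, u ∈ I → p <+: u →
      evalWord n p ∈ ⋃ w ∈ I, prefixSet n w := by
    intro u p hu hp
    exact Set.mem_biUnion hu ⟨p, hp, rfl⟩
  have memS' : ∀ {g}, g ∈ ⋃ w ∈ I, prefixSet n w →
      ∃ u ∈ I, ∃ p, p <+: u ∧ evalWord n p = g := by
    intro g hg
    simp only [Set.mem_iUnion, prefixSet, Set.mem_setOf_eq] at hg
    obtain ⟨u, hu, p, hp, he⟩ := hg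
    exact ⟨u, hu, p, hp, he⟩
  refine ⟨?_, ?_, ?_, ?_, ?_⟩
  · ext w
    constructor
    · intro hw
      refine ⟨⟨w, hw, rfl⟩, ?_⟩
      rintro g ⟨p, hp, rfl⟩
      exact memS hw hp
    · rintro ⟨hΓw, hPw⟩
      have hgood : Good I w := by
        refine good_of_prefixGood hI w ?_
        intro p hp
        obtain ⟨u, hu, q, hq, he⟩ := memS' (hPw ⟨p, hp, rfl⟩)
        exact ⟨q, good_of_prefix hI hu hq, he⟩
      obtain ⟨v, hv, hev⟩ := hΓw
      exact mem_of_good_eval hI hgood hv hev.symm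
  · refine ⟨{ carrier := evalWord n '' I,
              mul_mem' := ?_, one_mem' := ⟨[], hI.1, rfl⟩, inv_mem' := ?_ }, rfl⟩
    · rintro a b ⟨u, hu, rfl⟩ ⟨v, hv, rfl⟩
      exact ⟨u ++ v, concatI hI hu hv, eval_append u v⟩
    · rintro a ⟨u, hu, rfl⟩
      exact ⟨barWord u, barI hI hu, eval_bar u⟩
  · rintro g ⟨w, hw, rfl⟩
    exact memS hw (List.prefix_refl w)
  · rintro γ ⟨w₁, hw₁, rfl⟩ s hs
    obtain ⟨w₂, hw₂, p, hp, rfl⟩ := memS' hs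
    obtain ⟨r, rfl⟩ := hp
    have hpre : w₁ ++ p <+: w₁ ++ (p ++ r) := ⟨r, by rw [List.append_assoc]⟩
    have := memS (concatI hI hw₁ hw₂) hpre
    rwa [eval_append] at this
  · have h1 : (1 : FreeGroup (Fin n)) ∈ ⋃ w ∈ I, prefixSet n w := by
      have := memS hI.1 (List.nil_prefix (l := ([] : List (Fin n × Bool))))
      rwa [eval_nil] at this
    have reach : ∀ (p u : List (Fin n × Bool)) (hu : u ∈ I) (hp : p <+: u),
        (SimpleGraph.induce (⋃ w ∈ I, prefixSet n w) (cayley n)).Reachable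
          ⟨evalWord n p, memS hu hp⟩ ⟨1, h1⟩ := by
      intro p
      induction p using List.reverseRecOn with
      | nil =>
        intro u hu hp
        have heq : (⟨evalWord n [], memS hu hp⟩ :
            (⋃ w ∈ I, prefixSet n w : Set (FreeGroup (Fin n)))) = ⟨1, h1⟩ :=
          Subtype.ext eval_nil
        rw [heq]
      | append_singleton p l ih =>
        intro u hu hp
        have hp' : p <+: u := (List.prefix_append p [l]).trans hp
        refine (SimpleGraph.Adj.reachable ?_).trans (ih u hu hp')
        exact cayley_adj_step p l
    rw [SimpleGraph.connected_iff]
    refine ⟨?_, ⟨⟨1, h1⟩⟩⟩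
    intro a b
    obtain ⟨u, hu, p, hp, hep⟩ := memS' a.2
    obtain ⟨v, hv, q, hq, heq⟩ := memS' b.2
    have ha : a = ⟨evalWord n p, memS hu hp⟩ := Subtype.ext hep.symm
    have hb : b = ⟨evalWord n q, memS hv hq⟩ := Subtype.ext heq.symm
    rw [ha, hb]
    exact (reach p u hu hp).trans (reach q v hv hq).symm
end
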